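/- If A is a good λα-term (derivable in a context with empty local part) and A is a normal form with respect to σ ∪ {α} (all λα rules except Beta, together with the α rule), then A is a pure lambda-term containing no explicit substitutions. -/

import Mathlib

abbrev Var := ℕ
abbrev Ctx := Finset Var × List Var

/-- `Γ,x` : extend the local part with `x` as innermost (rightmost) variable.
Lists represent local contexts with head = outermost (leftmost). -/
def Ctx.snoc (Γ : Ctx) (x : Var) : Ctx := (Γ.1, Γ.2 ++ [x])

/-- The least partial order on contexts generated by
`(G,L) < (G ∪ {x}, L)` for `x ∉ G` and `(G,L) < (G \ {x}, x::L)`. -/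
inductive CtxLe : Ctx → Ctx → Prop
  | refl (Γ : Ctx) : CtxLe Γ Γ
  | trans {Γ Δ Θ : Ctx} : CtxLe Γ Δ → CtxLe Δ Θ → CtxLe Γ Θ
  | glob (G : Finset Var) (L : List Var) (x : Var) (h : x ∉ G) :
      CtxLe (G, L) (insert x G, L)
  | loc (G : Finset Var) (L : List Var) (x : Var) :
      CtxLe (G, L) (G.erase x, x :: L)

def Compatible (Γ Δ : Ctx) : Prop := ∃ Θ, CtxLe Γ Θ ∧ CtxLe Δ Θ

/-- Auxiliary supremum on contexts whose local lists have head = innermost. -/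
def supAux : Finset Var → List Var → Finset Var → List Var → Option (Finset Var × List Var)
  | G₁, [], G₂, [] => some (G₁ ∪ G₂, [])
  | G₁, x :: l₁, G₂, [] =>
      (supAux G₁ l₁ (G₂.erase x) []).map fun p => (p.1, x :: p.2)
  | G₁, [], G₂, x :: l₂ =>
      (supAux (G₁.erase x) [] G₂ l₂).map fun p => (p.1, x :: p.2)
  | G₁, x :: l₁, G₂, y :: l₂ =>
      if x = y then (supAux G₁ l₁ G₂ l₂).map fun p => (p.1, x :: p.2) else none
  termination_by _ l₁ _ l₂ => l₁.length + l₂.length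

/-- The (partial) supremum `Γ ⊔ Δ` of two contexts. -/
def ctxSup (Γ Δ : Ctx) : Option Ctx :=
  (supAux Γ.1 Γ.2.reverse Δ.1 Δ.2.reverse).map fun p => (p.1, p.2.reverse)

/-- The partial operation `O_{λx}` : `O_{λx}(Γ,x) = Γ`, `O_{λx}(G, nil) = (G \ {x}, nil)`,
undefined otherwise. -/
def Olam (x : Var) (Γ : Ctx) : Option Ctx :=
  match Γ.2.reverse with
  | [] => some (Γ.1.erase x, [])
  | y :: l => if y = x then some (Γ.1, l.reverse) else none

mutual
/-- Terms of the calculus λα. -/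
inductive Tm : Type
  | var : Var → Tm
  | app : Tm → Tm → Tm
  | lam : Var → Tm → Tm
  | sub : Sb → Tm → Tm
/-- Substitutions of the calculus λα: `[B/x]`, `Wx`, `{yx}`, `Sₓ`. -/
inductive Sb : Type
  | push : Tm → Var → Sb
  | weak : Var → Sb
  | ren : Var → Var → Sb
  | lift : Sb → Var → Sb
end

mutual
/-- The typing judgement `Γ ⊢ A` of λα (rules R1–R6). -/
inductive Judg : Ctx → Tm → Prop
  | r1 {G : Finset Var} {x : Var} (h : x ∈ G) : Judg (G, []) (.var x)
  | r2 (Γ : Ctx) (x : Var) : Judg (Γ.snoc x) (.var x)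
  | r3 {Γ : Ctx} {x y : Var} (h : x ≠ y) : Judg Γ (.var x) → Judg (Γ.snoc y) (.var x)
  | r4 {Γ A B} : Judg Γ A → Judg Γ B → Judg Γ (.app A B)
  | r5 {Γ x A} : Judg (Ctx.snoc Γ x) A → Judg Γ (.lam x A)
  | r6 {Γ Δ S A} : SJudg Γ S Δ → Judg Δ A → Judg Γ (.sub S A)
/-- The judgement `Γ ⊢ S ▷ Δ` of λα (rules R7–R10). -/
inductive SJudg : Ctx → Sb → Ctx → Prop
  | r7 {Γ B x} : Judg Γ B → SJudg Γ (.push B x) (Γ.snoc x)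
  | r8 (Γ x) : SJudg (Ctx.snoc Γ x) (.weak x) Γ
  | r9 (Γ y x) : SJudg (Ctx.snoc Γ y) (.ren y x) (Ctx.snoc Γ x)
  | r10 {Γ Δ S} (x) : SJudg Γ S Δ → SJudg (Ctx.snoc Γ x) (.lift S x) (Ctx.snoc Δ x)
end

mutual
/-- Weight of a term, used for the termination of `FV`. -/
def wT : Tm → ℕ
  | .var _ => 1
  | .app a b => wT a + wT b + 1
  | .lam _ a => wT a + 1
  | .sub s a => wS s + wT a
/-- Weight of a substitution, used for the termination of `FV`. -/
def wS : Sb → ℕ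
  | .weak _ => 1
  | .push b _ => wT b + 4
  | .ren _ _ => 4
  | .lift s _ => wS s + 3
end

/-- The partial free-variable function of λα, valued in contexts. -/
def FV : Tm → Option Ctx
  | .var x => some ({x}, [])
  | .app A B => do ctxSup (← FV A) (← FV B)
  | .lam x A => do Olam x (← FV A)
  | .sub (.weak x) A => (FV A).map (fun Γ => Ctx.snoc Γ x)
  | .sub (.push B x) A => FV (.app (.lam x A) B)
  | .sub (.ren y x) A => FV (.sub (.weak y) (.lam x A))
  | .sub (.lift S x) A => FV (.sub (.weak x) (.sub S (.lam x A)))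
  termination_by t => wT t
  decreasing_by all_goals simp [wT, wS] <;> omega

/-- `x ∈ Γ` : membership in the global or local part of a context. -/
def memCtx (x : Var) (Γ : Ctx) : Prop := x ∈ Γ.1 ∨ x ∈ Γ.2

mutual
/-- One-step σ ∪ {α} reduction: all λα rules except Beta, plus the α rule,
closed under compatible contexts. -/
inductive SigStep : Tm → Tm → Prop
  | app {S A B} : SigStep (.sub S (.app A B)) (.app (.sub S A) (.sub S B))
  | lam {S x A} : SigStep (.sub S (.lam x A)) (.lam x (.sub (.lift S x) A))
  | var {B x} : SigStep (.sub (.push B x) (.var x)) B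
  | shift {B x A} : SigStep (.sub (.push B x) (.sub (.weak x) A)) A
  | shift' {B x z} (h : x ≠ z) : SigStep (.sub (.push B x) (.var z)) (.var z)
  | idVar {y x} : SigStep (.sub (.ren y x) (.var x)) (.var y)
  | idShift {y x A} : SigStep (.sub (.ren y x) (.sub (.weak x) A)) (.sub (.weak y) A)
  | idShift' {y x z} (h : x ≠ z) :
      SigStep (.sub (.ren y x) (.var z)) (.sub (.weak y) (.var z))
  | liftVar {S x} : SigStep (.sub (.lift S x) (.var x)) (.var x)
  | liftShift {S x A} :
      SigStep (.sub (.lift S x) (.sub (.weak x) A)) (.sub (.weak x) (.sub S A))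
  | liftShift' {S x z} (h : x ≠ z) :
      SigStep (.sub (.lift S x) (.var z)) (.sub (.weak x) (.sub S (.var z)))
  | w {x z} (h : x ≠ z) : SigStep (.sub (.weak x) (.var z)) (.var z)
  | alpha {x y A Φ} (hFV : FV (.lam x A) = some Φ) (hx : memCtx x Φ)
      (hy : ¬ memCtx y Φ) : SigStep (.lam x A) (.lam y (.sub (.ren y x) A))
  | lamCong {x A A'} : SigStep A A' → SigStep (.lam x A) (.lam x A')
  | appL {A A' B} : SigStep A A' → SigStep (.app A B) (.app A' B)
  | appR {A B B'} : SigStep B B' → SigStep (.app A B) (.app A B')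
  | subL {S S' A} : SSigStep S S' → SigStep (.sub S A) (.sub S' A)
  | subR {S A A'} : SigStep A A' → SigStep (.sub S A) (.sub S A')
/-- One-step σ ∪ {α} reduction inside substitutions. -/
inductive SSigStep : Sb → Sb → Prop
  | push {B B' : Tm} {x} : SigStep B B' → SSigStep (.push B x) (.push B' x)
  | lift {S S' : Sb} {x} : SSigStep S S' → SSigStep (.lift S x) (.lift S' x)
end

/-- A term is pure (a usual λ-term) iff it contains no explicit substitutions. -/
def pureTm : Tm → Bool
  | .var _ => true
  | .app a b => pureTm a && pureTm b
  | .lam _ a => pureTm a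
  | .sub _ _ => false

/-!
A well-typed σα-normal form carries explicit substitutions only in blocks `Wx₁∘…∘Wxₙ∘Wz∘z`:
any other substitution meets a σ-redex (above a `Wx`, typing forces a `Shift`, `IdShift` or
`LiftShift` redex). The free-variable context of a block has `z` both global and outermost
local. This, together with the local part being a suffix of the typing context, survives
application (the supremum keeps the longer local part) and abstraction `λx` (which drops the
innermost local `x`), except when the local part is exactly `[x]`: then `x` is free in `λx.A`
and the α rule applies. So a non-pure normal form has a non-empty local part of free
variables, impossible when it is typed with an empty local part.
-/

theorem supAux_comm (G₁ : Finset Var) (l₁ : List Var) (G₂ : Finset Var) (l₂ : List Var) :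
    supAux G₁ l₁ G₂ l₂ = supAux G₂ l₂ G₁ l₁ := by
  fun_induction supAux G₁ l₁ G₂ l₂ <;> simp_all [supAux, Finset.union_comm, eq_comm]

theorem ctxSup_comm (Γ Δ : Ctx) : ctxSup Γ Δ = ctxSup Δ Γ := by
  rw [ctxSup, supAux_comm, ← ctxSup]

theorem supAux_of_prefix {G₁ G₂ : Finset Var} {r₁ r₂ : List Var} (h : r₂ <+: r₁) :
    ∃ G, G₁ ⊆ G ∧ supAux G₁ r₁ G₂ r₂ = some (G, r₁) := by
  induction r₁ generalizing G₂ r₂ with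
  | nil =>
    obtain rfl := List.prefix_nil.1 h
    exact ⟨G₁ ∪ G₂, Finset.subset_union_left, by simp [supAux]⟩
  | cons x l ih =>
    rcases List.prefix_cons_iff.1 h with rfl | ⟨l₂, rfl, hl⟩
    · obtain ⟨G, hG, h⟩ := ih (G₂ := G₂.erase x) List.nil_prefix
      exact ⟨G, hG, by simp [supAux, h]⟩
    · obtain ⟨G, hG, h⟩ := ih (G₂ := G₂) hl
      exact ⟨G, hG, by simp [supAux, h]⟩

theorem ctxSup_of_suffix {Γ Δ : Ctx} (h : Δ.2 <:+ Γ.2) :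
    ∃ G, Γ.1 ⊆ G ∧ ctxSup Γ Δ = some (G, Γ.2) := by
  obtain ⟨G, hG, h⟩ := supAux_of_prefix (G₁ := Γ.1) (G₂ := Δ.1) (List.reverse_prefix.2 h)
  exact ⟨G, hG, by simp [ctxSup, h]⟩

/-- `IsNFCtx L Ψ p`: `Ψ` can be the free-variable context of a σα-normal form of purity `p`
typed with local part `L`. -/
structure IsNFCtx (L : List Var) (Ψ : Ctx) (pure : Bool) : Prop where
  suffix : Ψ.2 <:+ L
  head_mem : ∀ z ∈ Ψ.2.head?, z ∈ Ψ.1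
  pure_of_nil : Ψ.2 = [] → pure = true

theorem IsNFCtx.ctxSup {L : List Var} {Ψ₁ Ψ₂ : Ctx} {p₁ p₂ : Bool}
    (h₁ : IsNFCtx L Ψ₁ p₁) (h₂ : IsNFCtx L Ψ₂ p₂) :
    ∃ Ψ, ctxSup Ψ₁ Ψ₂ = some Ψ ∧ IsNFCtx L Ψ (p₁ && p₂) := by
  wlog h : Ψ₂.2 <:+ Ψ₁.2 generalizing Ψ₁ Ψ₂ p₁ p₂
  · have h' := (List.suffix_or_suffix_of_suffix h₁.suffix h₂.suffix).resolve_right h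
    rw [ctxSup_comm, Bool.and_comm]
    exact this h₂ h₁ h'
  obtain ⟨G, hG, hsup⟩ := ctxSup_of_suffix h
  refine ⟨_, hsup, ⟨h₁.suffix, fun z hz => hG (h₁.head_mem z hz), fun hnil => ?_⟩⟩
  have hnil₂ : Ψ₂.2 = [] := List.suffix_nil.1 (hnil ▸ h)
  simp [h₁.pure_of_nil hnil, h₂.pure_of_nil hnil₂]

theorem IsNFCtx.olam {L : List Var} {x : Var} {Ψ : Ctx} {p : Bool}
    (h : IsNFCtx (L ++ [x]) Ψ p) :
    ∃ Ψ', Olam x Ψ = some Ψ' ∧ (memCtx x Ψ' ∨ IsNFCtx L Ψ' p) := by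
  obtain ⟨G, l⟩ := Ψ
  rcases List.suffix_concat_iff.1 h.suffix with rfl | ⟨m, rfl, hm⟩
  · exact ⟨(G.erase x, []), by simp [Olam],
      Or.inr ⟨List.nil_suffix, by simp, fun _ => h.pure_of_nil rfl⟩⟩
  refine ⟨(G, m), by simp [Olam], ?_⟩
  cases m with
  | nil => exact Or.inl (Or.inl (h.head_mem x (by simp)))
  | cons z m => exact Or.inr ⟨hm, fun y hy => h.head_mem y (by simpa using hy), nofun⟩

theorem exists_sigStep_lam_of_memCtx {x : Var} {A : Tm} {Φ : Ctx}
    (hFV : FV (.lam x A) = some Φ) (hx : memCtx x Φ) : ∃ C, SigStep (.lam x A) C := by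
  obtain ⟨y, hy⟩ := Infinite.exists_notMem_finset (Φ.1 ∪ Φ.2.toFinset)
  refine ⟨_, SigStep.alpha hFV hx (y := y) ?_⟩
  rintro (h | h) <;> simp_all

/-- The blocks `Wx₁∘…∘Wxₙ∘Wz∘z`. -/
inductive IsBlock : Tm → Prop
  | weak_var (z : Var) : IsBlock (.sub (.weak z) (.var z))
  | weak {A : Tm} (x : Var) : IsBlock A → IsBlock (.sub (.weak x) A)

theorem Judg.getLast?_of_sub_weak {Γ : Ctx} {x : Var} {A : Tm}
    (h : Judg Γ (.sub (.weak x) A)) : Γ.2.getLast? = some x := by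
  obtain _ | _ | _ | _ | _ | ⟨hS, -⟩ := h
  cases hS
  simp [Ctx.snoc]

theorem isBlock_of_nf {Γ : Ctx} {S : Sb} :
    ∀ {A : Tm}, Judg Γ (.sub S A) → (∀ C, ¬ SigStep (.sub S A) C) → IsBlock (.sub S A)
  | .var v, _, hnf => by
    cases S with
    | weak x =>
      rcases eq_or_ne x v with rfl | h
      exacts [.weak_var x, (hnf _ (.w h)).elim]
    | push B x =>
      rcases eq_or_ne x v with rfl | h
      exacts [(hnf _ .var).elim, (hnf _ (.shift' h)).elim]
    | ren y x =>
      rcases eq_or_ne x v with rfl | h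
      exacts [(hnf _ .idVar).elim, (hnf _ (.idShift' h)).elim]
    | lift T x =>
      rcases eq_or_ne x v with rfl | h
      exacts [(hnf _ .liftVar).elim, (hnf _ (.liftShift' h)).elim]
  | .app A B, _, hnf => (hnf _ .app).elim
  | .lam x A, _, hnf => (hnf _ .lam).elim
  | .sub T A, hJ, hnf => by
    obtain _ | _ | _ | _ | _ | ⟨hS, hJ⟩ := hJ
    have hblock := isBlock_of_nf hJ fun C h => hnf _ (.subR h)
    obtain ⟨w, rfl⟩ : ∃ w, T = .weak w := by cases hblock <;> exact ⟨_, rfl⟩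
    have hlast := hJ.getLast?_of_sub_weak
    cases hS with
    | r8 => exact .weak _ hblock
    | r7 | r9 | r10 =>
      simp only [Ctx.snoc, List.getLast?_concat, Option.some.injEq] at hlast
      subst hlast
      first
      | exact (hnf _ .shift).elim
      | exact (hnf _ .idShift).elim
      | exact (hnf _ .liftShift).elim

theorem IsBlock.FV_eq {A : Tm} (hA : IsBlock A) :
    ∀ {Γ : Ctx}, Judg Γ A → ∃ z l, FV A = some ({z}, z :: l) ∧ z :: l <:+ Γ.2 := by
  induction hA with
  | weak_var z =>
    rintro Γ (_ | _ | _ | _ | _ | ⟨⟨⟩, -⟩)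
    exact ⟨z, [], by simp [FV, Ctx.snoc], by simp [Ctx.snoc]⟩
  | weak x _ ih =>
    rintro Γ (_ | _ | _ | _ | _ | ⟨⟨⟩, hJ⟩)
    obtain ⟨z, l, hFV, hl⟩ := ih hJ
    exact ⟨z, l ++ [x], by simp [FV, hFV, Ctx.snoc],
      List.suffix_concat_iff.2 (Or.inr ⟨_, rfl, hl⟩)⟩

theorem isNFCtx_FV_of_nf :
    ∀ {Γ : Ctx} {A : Tm}, Judg Γ A → (∀ C, ¬ SigStep A C) →
      ∃ Ψ, FV A = some Ψ ∧ IsNFCtx Γ.2 Ψ (pureTm A)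
  | _, .var v, _, _ => ⟨({v}, []), by simp [FV], List.nil_suffix, by simp, fun _ => rfl⟩
  | _, .app A B, .r4 hA hB, hnf => by
    obtain ⟨Ψ₁, hFV₁, h₁⟩ := isNFCtx_FV_of_nf hA fun C h => hnf _ (.appL h)
    obtain ⟨Ψ₂, hFV₂, h₂⟩ := isNFCtx_FV_of_nf hB fun C h => hnf _ (.appR h)
    obtain ⟨Ψ, hsup, h⟩ := h₁.ctxSup h₂
    exact ⟨Ψ, by simp [FV, hFV₁, hFV₂, hsup], h⟩
  | _, .lam x A, .r5 hA, hnf => by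
    obtain ⟨Ψ, hFV, h⟩ := isNFCtx_FV_of_nf hA fun C h => hnf _ (.lamCong h)
    obtain ⟨Ψ', hΨ', hx | h'⟩ := h.olam
    · have hFV' : FV (.lam x A) = some Ψ' := by simp [FV, hFV, hΨ']
      obtain ⟨C, hC⟩ := exists_sigStep_lam_of_memCtx hFV' hx
      exact (hnf C hC).elim
    · exact ⟨Ψ', by simp [FV, hFV, hΨ'], h'⟩
  | _, .sub S A, hJ, hnf => by
    obtain ⟨z, l, hFV, hl⟩ := (isBlock_of_nf hJ hnf).FV_eq hJ
    exact ⟨_, hFV, hl, by simp, nofun⟩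

/-- A good term (derivable in a context with empty local part) that is a
σ ∪ {α}-normal form is a pure λ-term, with no explicit substitutions. -/
theorem good_signf_pure (A : Tm)
    (hgood : ∃ G : Finset Var, Judg (G, ([] : List Var)) A)
    (hnf : ∀ B, ¬ SigStep A B) : pureTm A = true := by
  obtain ⟨G, hJ⟩ := hgood
  obtain ⟨Ψ, -, h⟩ := isNFCtx_FV_of_nf hJ hnf
  exact h.pure_of_nil (List.suffix_nil.1 h.suffix)
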